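/- Let V be an N×N real orthogonal matrix and C = V Σ Vᵀ with Σ diagonal. Then for any diagonal matrix Λ and any naturals τ₁, τ₂, τ with τ ≤ τ₂: (V Λ^{τ₁} Vᵀ) C (V Λ^{τ₂} Vᵀ) = (V Λ^{τ₁+τ} Vᵀ) C (V Λ^{τ₂−τ} Vᵀ). -/
import Mathlib


open Matrix

lemma diag_mul_comm {n : ℕ} {A B : Matrix (Fin n) (Fin n) ℝ}
    (hA : A.IsDiag) (hB : B.IsDiag) : A * B = B * A := by
  ext i j
  simp only [Matrix.mul_apply]
  apply Finset.sum_congr rfl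
  intro k _
  by_cases h1 : i = k <;> by_cases h2 : k = j
  · subst h1; subst h2; ring
  · subst h1; rw [hB h2, hA h2]; ring
  · subst h2; rw [hA h1, hB h1]; ring
  · rw [hA h1, hA h2]; ring

theorem stmt_7 (N : ℕ) (V S Λ : Matrix (Fin N) (Fin N) ℝ)
    (hV : V * Vᵀ = 1) (hS : S.IsDiag) (hΛ : Λ.IsDiag)
    (C : Matrix (Fin N) (Fin N) ℝ) (hC : C = V * S * Vᵀ)
    (τ₁ τ₂ τ : ℕ) (hτ : τ ≤ τ₂) :
    (V * Λ ^ τ₁ * Vᵀ) * C * (V * Λ ^ τ₂ * Vᵀ) =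
      (V * Λ ^ (τ₁ + τ) * Vᵀ) * C * (V * Λ ^ (τ₂ - τ) * Vᵀ) := by
  have hVt : Vᵀ * V = 1 := mul_eq_one_comm.mp hV
  have hcomm : Commute S Λ := diag_mul_comm hS hΛ
  have key : ∀ a b : ℕ, Λ ^ a * S * Λ ^ b = S * Λ ^ (a + b) := by
    intro a b
    rw [(hcomm.symm.pow_left a).eq, mul_assoc, ← pow_add]
  have hmul : ∀ a b : ℕ, (V * Λ ^ a * Vᵀ) * C * (V * Λ ^ b * Vᵀ) =
      V * (Λ ^ a * S * Λ ^ b) * Vᵀ := by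
    intro a b
    rw [hC]
    have cancel : ∀ X : Matrix (Fin N) (Fin N) ℝ, Vᵀ * (V * X) = X := fun X => by
      rw [← Matrix.mul_assoc, hVt, Matrix.one_mul]
    simp only [Matrix.mul_assoc, cancel]
  rw [hmul, hmul, key, key, Nat.add_assoc, Nat.add_sub_cancel' hτ]
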